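/- Reflexivity and transitivity of syntactic subtyping: (1) t ≤ t and s ≤ s for all positive type names t and negative type names s defined in the signature Σ; (2) if t₁ ≤ t₂ and t₂ ≤ t₃ then t₁ ≤ t₃; (3) if s₁ ≤ s₂ and s₂ ≤ s₃ then s₁ ≤ s₃. -/

import Mathlib

namespace CBPV

abbrev Label := String
abbrev Var := String

-- Positive types (values); `name` refers to an equirecursively defined type name.
mutual
inductive PosTp : Type where
  | name : String → PosTp
  | str  : PosStr → PosTp

/-- Structural positive types. -/
inductive PosStr : Type where
  | tensor : PosTp → PosTp → PosStr
  | one    : PosStr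
  | plus   : List (Label × PosTp) → PosStr
  | down   : NegTp → PosStr

/-- Negative types (computations). -/
inductive NegTp : Type where
  | name : String → NegTp
  | str  : NegStr → NegTp

/-- Structural negative types. -/
inductive NegStr : Type where
  | arrow   : PosTp → NegTp → NegStr
  | withRec : List (Label × NegTp) → NegStr
  | up      : PosTp → NegStr
end

mutual
/-- Values. -/
inductive Val : Type where
  | var   : Var → Val
  | pair  : Val → Val → Val
  | unit  : Val
  | inj   : Label → Val → Val
  | thunk : Comp → Val

/-- Computations. -/
inductive Comp : Type where
  | lam       : Var → Comp → Comp
  | app       : Comp → Val → Comp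
  | record    : List (Label × Comp) → Comp
  | proj      : Comp → Label → Comp
  | ret       : Val → Comp
  | letret    : Var → Comp → Comp → Comp
  | name      : String → Comp
  | matchPair : Val → Var → Var → Comp → Comp
  | matchUnit : Val → Comp → Comp
  | matchSum  : Val → List (Label × Var × Comp) → Comp
  | force     : Val → Comp
end

/-- A global signature: equirecursive (contractive) type definitions `t = τ⁺`,
`s = σ⁻`, and recursive expression definitions `f : σ⁻ = e`. -/
structure Signature : Type where
  pos  : String → PosStr
  neg  : String → NegStr
  defs : String → NegTp × Comp

mutual
/-- Substitution of value `w` for variable `x` in a value. -/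
def substV (w : Val) (x : Var) : Val → Val
  | .var y => if y = x then w else .var y
  | .pair v₁ v₂ => .pair (substV w x v₁) (substV w x v₂)
  | .unit => .unit
  | .inj j v => .inj j (substV w x v)
  | .thunk e => .thunk (substC w x e)

/-- Substitution of value `w` for variable `x` in a computation. -/
def substC (w : Val) (x : Var) : Comp → Comp
  | .lam y e => .lam y (if y = x then e else substC w x e)
  | .app e v => .app (substC w x e) (substV w x v)
  | .record L => .record (substRec w x L)
  | .proj e j => .proj (substC w x e) j
  | .ret v => .ret (substV w x v)
  | .letret y e₁ e₂ => .letret y (substC w x e₁) (if y = x then e₂ else substC w x e₂)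
  | .name f => .name f
  | .matchPair v y z e =>
      .matchPair (substV w x v) y z (if y = x ∨ z = x then e else substC w x e)
  | .matchUnit v e => .matchUnit (substV w x v) (substC w x e)
  | .matchSum v B => .matchSum (substV w x v) (substBr w x B)
  | .force v => .force (substV w x v)

def substRec (w : Val) (x : Var) : List (Label × Comp) → List (Label × Comp)
  | [] => []
  | (l, e) :: rest => (l, substC w x e) :: substRec w x rest

def substBr (w : Val) (x : Var) : List (Label × Var × Comp) → List (Label × Var × Comp)
  | [] => []
  | (l, y, e) :: rest =>
      (l, y, if y = x then e else substC w x e) :: substBr w x rest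
end

/-- Terminal computations. -/
inductive Terminal : Comp → Prop where
  | lam    : Terminal (.lam x e)
  | record : Terminal (.record L)
  | ret    : Terminal (.ret v)

/-- Small-step dynamics of call-by-push-value, relative to a signature. -/
inductive Step (Sg : Signature) : Comp → Comp → Prop where
  | beta       : Step Sg (.app (.lam x e) v) (substC v x e)
  | app        : Step Sg e e' → Step Sg (.app e v) (.app e' v)
  | letretBeta : Step Sg (.letret x (.ret v) e₂) (substC v x e₂)
  | letretStep : Step Sg e₁ e₁' → Step Sg (.letret x e₁ e₂) (.letret x e₁' e₂)
  | projBeta   : L.lookup j = some e → Step Sg (.proj (.record L) j) e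
  | projStep   : Step Sg e e' → Step Sg (.proj e j) (.proj e' j)
  | matchPair  : Step Sg (.matchPair (.pair v₁ v₂) x y e) (substC v₁ x (substC v₂ y e))
  | matchUnit  : Step Sg (.matchUnit .unit e) e
  | matchSum   : B.lookup j = some (x, ej) → Step Sg (.matchSum (.inj j v) B) (substC v x ej)
  | force      : Step Sg (.force (.thunk e)) e
  | name       : Sg.defs f = (σ, e) → Step Sg (.name f) e

end CBPV

namespace CBPV

def PosTp.IsName : PosTp → Prop := fun τ => ∃ t, τ = .name t
def NegTp.IsName : NegTp → Prop := fun σ => ∃ s, σ = .name s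

/-- A structural positive type is in normal form if all of its components are
type names, and its label lists have no duplicate labels. -/
def PosStrNormal : PosStr → Prop
  | .tensor τ₁ τ₂ => τ₁.IsName ∧ τ₂.IsName
  | .one => True
  | .plus L => (∀ p ∈ L, (Prod.snd p).IsName) ∧ (L.map Prod.fst).Nodup
  | .down σ => σ.IsName

def NegStrNormal : NegStr → Prop
  | .arrow τ σ => τ.IsName ∧ σ.IsName
  | .withRec L => (∀ p ∈ L, (Prod.snd p).IsName) ∧ (L.map Prod.fst).Nodup
  | .up τ => τ.IsName

/-- A signature is in normal form when every type definition alternates between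
type names and structural types, i.e. the components of every defined
structural type are themselves type names. -/
def SigNormal (Sg : Signature) : Prop :=
  (∀ t, PosStrNormal (Sg.pos t)) ∧ (∀ s, NegStrNormal (Sg.neg s))

/-- One unfolding of the rules for the emptiness judgment `t empty`. -/
def EmptyUnf (Sg : Signature) (S : String → Prop) (t : String) : Prop :=
  (∃ L, Sg.pos t = .plus L ∧
     ∀ p ∈ L, ∃ tj, Prod.snd p = PosTp.name tj ∧ S tj) ∨
  (∃ t₁ t₂, Sg.pos t = .tensor (.name t₁) (.name t₂) ∧ (S t₁ ∨ S t₂))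

/-- `t empty`: the greatest fixed point (circular derivations) of the
emptiness rules. -/
def TpEmpty (Sg : Signature) (t : String) : Prop :=
  ∃ S : String → Prop, (∀ u, S u → EmptyUnf Sg S u) ∧ S t

/-- `s full`: `s = t₁ → s₂ ∈ Σ` with `t₁ empty`, or `s = &{} ∈ Σ`. -/
def TpFull (Sg : Signature) (s : String) : Prop :=
  (∃ t₁ s₂, Sg.neg s = .arrow (.name t₁) (.name s₂) ∧ TpEmpty Sg t₁) ∨
  Sg.neg s = .withRec []

/-- One unfolding of the rules for positive subtyping `t ≤ u` between
positive type names. -/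
def PosSubUnf (Sg : Signature) (P N : String → String → Prop) (t u : String) : Prop :=
  (∃ t₁ t₂ u₁ u₂, Sg.pos t = .tensor (.name t₁) (.name t₂) ∧
     Sg.pos u = .tensor (.name u₁) (.name u₂) ∧ P t₁ u₁ ∧ P t₂ u₂) ∨
  (Sg.pos t = .one ∧ Sg.pos u = .one) ∨
  (∃ L K, Sg.pos t = .plus L ∧ Sg.pos u = .plus K ∧
     ∀ p ∈ L, ∃ tj, Prod.snd p = PosTp.name tj ∧
       (TpEmpty Sg tj ∨ ∃ uj, K.lookup (Prod.fst p) = some (PosTp.name uj) ∧ P tj uj)) ∨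
  (∃ s r, Sg.pos t = .down (.name s) ∧ Sg.pos u = .down (.name r) ∧ N s r) ∨
  TpEmpty Sg t

/-- One unfolding of the rules for negative subtyping `s ≤ r` between
negative type names. -/
def NegSubUnf (Sg : Signature) (P N : String → String → Prop) (s r : String) : Prop :=
  (∃ t₁ s₂ u₁ r₂, Sg.neg s = .arrow (.name t₁) (.name s₂) ∧
     Sg.neg r = .arrow (.name u₁) (.name r₂) ∧ P u₁ t₁ ∧ N s₂ r₂) ∨
  (∃ t u, Sg.neg s = .up (.name t) ∧ Sg.neg r = .up (.name u) ∧ P t u) ∨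
  (∃ L K, Sg.neg s = .withRec L ∧ Sg.neg r = .withRec K ∧
     ∀ p ∈ K, ∃ rj, Prod.snd p = NegTp.name rj ∧
       ∃ sj, L.lookup (Prod.fst p) = some (NegTp.name sj) ∧ N sj rj) ∨
  (∃ t, Sg.neg s = .up (.name t) ∧ TpEmpty Sg t) ∨
  TpFull Sg r

/-- `t ≤ u`: syntactic subtyping between positive type names, interpreted as
circular derivations (greatest fixed point of the subtyping rules). -/
def PosSub (Sg : Signature) (t u : String) : Prop :=
  ∃ P N : String → String → Prop,
    (∀ a b, P a b → PosSubUnf Sg P N a b) ∧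
    (∀ a b, N a b → NegSubUnf Sg P N a b) ∧ P t u

/-- `s ≤ r`: syntactic subtyping between negative type names, interpreted as
circular derivations (greatest fixed point of the subtyping rules). -/
def NegSub (Sg : Signature) (s r : String) : Prop :=
  ∃ P N : String → String → Prop,
    (∀ a b, P a b → PosSubUnf Sg P N a b) ∧
    (∀ a b, N a b → NegSubUnf Sg P N a b) ∧ N s r

end CBPV

/-! Both judgments are greatest fixed points, so each property follows by exhibiting a relation
closed under the rules: the identity for reflexivity (in a normal signature every component of a
structural type is a name, so each rule relates a type to itself), and the composite `≤ ∘ ≤` for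
transitivity. Where both derivations match the middle type structurally the rules compose
componentwise; the remaining cases need that emptiness propagates downwards along `≤` and fullness
upwards. -/

namespace List

variable {α β : Type*} [BEq α] [LawfulBEq α]

theorem mem_of_lookup_eq_some {l : List (α × β)} {a : α} {b : β} (h : l.lookup a = some b) :
    (a, b) ∈ l := by
  obtain ⟨l₁, l₂, rfl, -⟩ := lookup_eq_some_iff.1 h
  simp

theorem lookup_eq_some_of_mem {l : List (α × β)} (hl : (l.map Prod.fst).Nodup) {p : α × β}
    (hp : p ∈ l) : l.lookup p.1 = some p.2 := by
  induction l with
  | nil => simp at hp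
  | cons q l ih =>
    obtain ⟨k, v⟩ := q
    obtain ⟨hk, hl⟩ := nodup_cons.1 hl
    rcases mem_cons.1 hp with rfl | hp
    · simp
    · have hne : p.1 ≠ k := fun h => hk (h ▸ mem_map.2 ⟨p, hp, rfl⟩)
      simpa only [lookup_cons, beq_eq_false_iff_ne.2 hne] using ih hl hp

end List

namespace CBPV

local infixr:80 " ∘r " => Relation.Comp

section Development

variable {Sg : Signature}

/- The unfolding rules of `EmptyUnf`, `TpFull`, `PosSubUnf` and `NegSubUnf`, read off the defining
structural types as inductive predicates: case analysis on two of them then discards every pair of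
mismatched type constructors at once. -/

inductive PosStrEmpty (S : String → Prop) : PosStr → Prop
  | plus {L : List (Label × PosTp)} :
      (∀ p ∈ L, ∃ tj, p.2 = .name tj ∧ S tj) → PosStrEmpty S (.plus L)
  | tensor {t₁ t₂ : String} : S t₁ ∨ S t₂ → PosStrEmpty S (.tensor (.name t₁) (.name t₂))

inductive NegStrFull (Sg : Signature) : NegStr → Prop
  | arrow {t₁ s₂ : String} : TpEmpty Sg t₁ → NegStrFull Sg (.arrow (.name t₁) (.name s₂))
  | withRec : NegStrFull Sg (.withRec [])

inductive PosStrSub (Sg : Signature) (P N : String → String → Prop) : PosStr → PosStr → Prop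
  | tensor {t₁ t₂ u₁ u₂ : String} : P t₁ u₁ → P t₂ u₂ →
      PosStrSub Sg P N (.tensor (.name t₁) (.name t₂)) (.tensor (.name u₁) (.name u₂))
  | one : PosStrSub Sg P N .one .one
  | plus {L K : List (Label × PosTp)} :
      (∀ p ∈ L, ∃ tj, p.2 = .name tj ∧
        (TpEmpty Sg tj ∨ ∃ uj, K.lookup p.1 = some (.name uj) ∧ P tj uj)) →
      PosStrSub Sg P N (.plus L) (.plus K)
  | down {s r : String} : N s r → PosStrSub Sg P N (.down (.name s)) (.down (.name r))

inductive NegStrSub (Sg : Signature) (P N : String → String → Prop) : NegStr → NegStr → Prop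
  | arrow {t₁ s₂ u₁ r₂ : String} : P u₁ t₁ → N s₂ r₂ →
      NegStrSub Sg P N (.arrow (.name t₁) (.name s₂)) (.arrow (.name u₁) (.name r₂))
  | up {t u : String} : P t u → NegStrSub Sg P N (.up (.name t)) (.up (.name u))
  | withRec {L K : List (Label × NegTp)} :
      (∀ p ∈ K, ∃ rj, p.2 = .name rj ∧ ∃ sj, L.lookup p.1 = some (.name sj) ∧ N sj rj) →
      NegStrSub Sg P N (.withRec L) (.withRec K)
  | upEmpty {t : String} {ρ : NegStr} : TpEmpty Sg t → NegStrSub Sg P N (.up (.name t)) ρ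

theorem emptyUnf_iff {S : String → Prop} {t : String} :
    EmptyUnf Sg S t ↔ PosStrEmpty S (Sg.pos t) := by
  constructor
  · rintro (⟨L, ht, h⟩ | ⟨t₁, t₂, ht, h⟩) <;> rw [ht]
    exacts [.plus h, .tensor h]
  · generalize ht : Sg.pos t = σ
    rintro (@⟨L, h⟩ | @⟨t₁, t₂, h⟩)
    exacts [.inl ⟨L, ht, h⟩, .inr ⟨t₁, t₂, ht, h⟩]

theorem tpFull_iff {s : String} : TpFull Sg s ↔ NegStrFull Sg (Sg.neg s) := by
  constructor
  · rintro (⟨t₁, s₂, hs, h⟩ | hs) <;> rw [hs]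
    exacts [.arrow h, .withRec]
  · generalize hs : Sg.neg s = σ
    rintro (@⟨t₁, s₂, h⟩ | _)
    exacts [.inl ⟨t₁, s₂, hs, h⟩, .inr hs]

theorem posSubUnf_iff {P N : String → String → Prop} {t u : String} :
    PosSubUnf Sg P N t u ↔ PosStrSub Sg P N (Sg.pos t) (Sg.pos u) ∨ TpEmpty Sg t := by
  constructor
  · rintro (⟨t₁, t₂, u₁, u₂, ht, hu, h₁, h₂⟩ | ⟨ht, hu⟩ | ⟨L, K, ht, hu, h⟩ |
      ⟨s, r, ht, hu, h⟩ | h)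
    · rw [ht, hu]; exact .inl (.tensor h₁ h₂)
    · rw [ht, hu]; exact .inl .one
    · rw [ht, hu]; exact .inl (.plus h)
    · rw [ht, hu]; exact .inl (.down h)
    · exact .inr h
  · generalize ht : Sg.pos t = σ
    generalize hu : Sg.pos u = τ
    rintro ((@⟨t₁, t₂, u₁, u₂, h₁, h₂⟩ | _ | @⟨L, K, h⟩ | @⟨s, r, h⟩) | h)
    exacts [.inl ⟨t₁, t₂, u₁, u₂, ht, hu, h₁, h₂⟩, .inr (.inl ⟨ht, hu⟩),
      .inr (.inr (.inl ⟨L, K, ht, hu, h⟩)), .inr (.inr (.inr (.inl ⟨s, r, ht, hu, h⟩))),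
      .inr (.inr (.inr (.inr h)))]

theorem negSubUnf_iff {P N : String → String → Prop} {s r : String} :
    NegSubUnf Sg P N s r ↔ NegStrSub Sg P N (Sg.neg s) (Sg.neg r) ∨ TpFull Sg r := by
  constructor
  · rintro (⟨t₁, s₂, u₁, r₂, hs, hr, h₁, h₂⟩ | ⟨t, u, hs, hr, h⟩ | ⟨L, K, hs, hr, h⟩ |
      ⟨t, hs, h⟩ | h)
    · rw [hs, hr]; exact .inl (.arrow h₁ h₂)
    · rw [hs, hr]; exact .inl (.up h)
    · rw [hs, hr]; exact .inl (.withRec h)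
    · rw [hs]; exact .inl (.upEmpty h)
    · exact .inr h
  · generalize hs : Sg.neg s = σ
    generalize hr : Sg.neg r = ρ
    rintro ((@⟨t₁, s₂, u₁, r₂, h₁, h₂⟩ | @⟨t, u, h⟩ | @⟨L, K, h⟩ | @⟨t, _, h⟩) | h)
    exacts [.inl ⟨t₁, s₂, u₁, r₂, hs, hr, h₁, h₂⟩, .inr (.inl ⟨t, u, hs, hr, h⟩),
      .inr (.inr (.inl ⟨L, K, hs, hr, h⟩)), .inr (.inr (.inr (.inl ⟨t, hs, h⟩))),
      .inr (.inr (.inr (.inr h)))]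

section Monotone

variable {P N P' N' : String → String → Prop}

theorem PosStrEmpty.mono {S S' : String → Prop} (hS : ∀ x, S x → S' x) {σ : PosStr}
    (h : PosStrEmpty S σ) : PosStrEmpty S' σ := by
  cases h with
  | plus h => exact .plus fun p hp => (h p hp).imp fun _ => And.imp_right (hS _)
  | tensor h => exact .tensor (h.imp (hS _) (hS _))

theorem PosStrSub.mono (hP : ∀ a b, P a b → P' a b) (hN : ∀ a b, N a b → N' a b)
    {σ τ : PosStr} (h : PosStrSub Sg P N σ τ) : PosStrSub Sg P' N' σ τ := by
  cases h with
  | tensor h₁ h₂ => exact .tensor (hP _ _ h₁) (hP _ _ h₂)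
  | one => exact .one
  | plus h =>
    exact .plus fun p hp => (h p hp).imp fun _ =>
      And.imp_right (Or.imp_right fun ⟨uj, hl, h⟩ => ⟨uj, hl, hP _ _ h⟩)
  | down h => exact .down (hN _ _ h)

theorem NegStrSub.mono (hP : ∀ a b, P a b → P' a b) (hN : ∀ a b, N a b → N' a b)
    {σ ρ : NegStr} (h : NegStrSub Sg P N σ ρ) : NegStrSub Sg P' N' σ ρ := by
  cases h with
  | arrow h₁ h₂ => exact .arrow (hP _ _ h₁) (hN _ _ h₂)
  | up h => exact .up (hP _ _ h)
  | withRec h =>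
    exact .withRec fun p hp => (h p hp).imp fun _ =>
      And.imp_right fun ⟨sj, hl, h⟩ => ⟨sj, hl, hN _ _ h⟩
  | upEmpty h => exact .upEmpty h

end Monotone

theorem TpEmpty.unfold {t : String} (h : TpEmpty Sg t) : PosStrEmpty (TpEmpty Sg) (Sg.pos t) := by
  obtain ⟨S, hS, ht⟩ := h
  exact (emptyUnf_iff.1 (hS t ht)).mono fun x hx => ⟨S, hS, hx⟩

theorem PosSub.unfold {t u : String} (h : PosSub Sg t u) :
    PosStrSub Sg (PosSub Sg) (NegSub Sg) (Sg.pos t) (Sg.pos u) ∨ TpEmpty Sg t := by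
  obtain ⟨P, N, hP, hN, htu⟩ := h
  exact (posSubUnf_iff.1 (hP t u htu)).imp_left
    (PosStrSub.mono (fun a b h => ⟨P, N, hP, hN, h⟩) (fun a b h => ⟨P, N, hP, hN, h⟩))

theorem NegSub.unfold {s r : String} (h : NegSub Sg s r) :
    NegStrSub Sg (PosSub Sg) (NegSub Sg) (Sg.neg s) (Sg.neg r) ∨ TpFull Sg r := by
  obtain ⟨P, N, hP, hN, hsr⟩ := h
  exact (negSubUnf_iff.1 (hN s r hsr)).imp_left
    (NegStrSub.mono (fun a b h => ⟨P, N, hP, hN, h⟩) (fun a b h => ⟨P, N, hP, hN, h⟩))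

theorem PosSub.coinduct {P N : String → String → Prop}
    (hP : ∀ a b, P a b → PosStrSub Sg P N (Sg.pos a) (Sg.pos b) ∨ TpEmpty Sg a)
    (hN : ∀ a b, N a b → NegStrSub Sg P N (Sg.neg a) (Sg.neg b) ∨ TpFull Sg b)
    {t u : String} (h : P t u) : PosSub Sg t u :=
  ⟨P, N, fun a b h => posSubUnf_iff.2 (hP a b h), fun a b h => negSubUnf_iff.2 (hN a b h), h⟩

theorem NegSub.coinduct {P N : String → String → Prop}
    (hP : ∀ a b, P a b → PosStrSub Sg P N (Sg.pos a) (Sg.pos b) ∨ TpEmpty Sg a)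
    (hN : ∀ a b, N a b → NegStrSub Sg P N (Sg.neg a) (Sg.neg b) ∨ TpFull Sg b)
    {s r : String} (h : N s r) : NegSub Sg s r :=
  ⟨P, N, fun a b h => posSubUnf_iff.2 (hP a b h), fun a b h => negSubUnf_iff.2 (hN a b h), h⟩

theorem PosStrSub.posStrEmpty {P N : String → String → Prop} {T : String → Prop}
    {σ τ : PosStr} (h : PosStrSub Sg P N σ τ) (hτ : PosStrEmpty T τ) :
    PosStrEmpty (fun x => TpEmpty Sg x ∨ ∃ y, P x y ∧ T y) σ := by
  cases h with
  | tensor h₁ h₂ =>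
    cases hτ with
    | tensor hT => exact .tensor (hT.imp (fun h => .inr ⟨_, h₁, h⟩) (fun h => .inr ⟨_, h₂, h⟩))
  | plus h =>
    cases hτ with
    | plus hT =>
      refine .plus fun p hp => ?_
      obtain ⟨tj, hpj, htj | ⟨uj, hl, htu⟩⟩ := h p hp
      · exact ⟨tj, hpj, .inl htj⟩
      obtain ⟨_, ⟨⟩, hT⟩ := hT _ (List.mem_of_lookup_eq_some hl)
      exact ⟨tj, hpj, .inr ⟨uj, htu, hT⟩⟩
  | one | down => cases hτ

theorem TpEmpty.of_posSub {t u : String} (h : PosSub Sg t u) (hu : TpEmpty Sg u) :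
    TpEmpty Sg t := by
  refine ⟨fun x => TpEmpty Sg x ∨ ∃ y, PosSub Sg x y ∧ TpEmpty Sg y, ?_, .inr ⟨u, h, hu⟩⟩
  rintro x (hx | ⟨y, hxy, hy⟩)
  · exact emptyUnf_iff.2 (hx.unfold.mono fun _ => .inl)
  · rcases hxy.unfold with hxy | hx
    · exact emptyUnf_iff.2 (hxy.posStrEmpty hy.unfold)
    · exact emptyUnf_iff.2 (hx.unfold.mono fun _ => .inl)

theorem NegStrSub.negStrFull {N : String → String → Prop} {σ ρ : NegStr}
    (h : NegStrSub Sg (PosSub Sg) N σ ρ) (hσ : NegStrFull Sg σ) : NegStrFull Sg ρ := by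
  cases h with
  | arrow h₁ _ => cases hσ with | arrow ht => exact .arrow (ht.of_posSub h₁)
  | @withRec _ K h =>
    cases hσ
    obtain rfl : K = [] := List.eq_nil_iff_forall_not_mem.2 fun p hp => by
      obtain ⟨_, _, _, hl, _⟩ := h p hp
      simp at hl
    exact .withRec
  | up | upEmpty => cases hσ

theorem TpFull.of_negSub {s r : String} (hs : TpFull Sg s) (h : NegSub Sg s r) : TpFull Sg r := by
  rcases h.unfold with h | hr
  · exact tpFull_iff.2 (h.negStrFull (tpFull_iff.1 hs))
  · exact hr

theorem PosStrSub.refl {σ : PosStr} (hσ : PosStrNormal σ) : PosStrSub Sg Eq Eq σ σ := by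
  cases σ with
  | tensor τ₁ τ₂ =>
    obtain ⟨⟨t₁, rfl⟩, ⟨t₂, rfl⟩⟩ := hσ
    exact .tensor rfl rfl
  | one => exact .one
  | plus L =>
    refine .plus fun p hp => ?_
    obtain ⟨tj, hpj⟩ := hσ.1 p hp
    exact ⟨tj, hpj, .inr ⟨tj, hpj ▸ List.lookup_eq_some_of_mem hσ.2 hp, rfl⟩⟩
  | down σ =>
    obtain ⟨s, rfl⟩ := hσ
    exact .down rfl

theorem NegStrSub.refl {σ : NegStr} (hσ : NegStrNormal σ) : NegStrSub Sg Eq Eq σ σ := by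
  cases σ with
  | arrow τ σ =>
    obtain ⟨⟨t, rfl⟩, ⟨s, rfl⟩⟩ := hσ
    exact .arrow rfl rfl
  | withRec L =>
    refine .withRec fun p hp => ?_
    obtain ⟨sj, hpj⟩ := hσ.1 p hp
    exact ⟨sj, hpj, sj, hpj ▸ List.lookup_eq_some_of_mem hσ.2 hp, rfl⟩
  | up τ =>
    obtain ⟨t, rfl⟩ := hσ
    exact .up rfl

theorem PosSub.refl (hN : SigNormal Sg) (t : String) : PosSub Sg t t :=
  PosSub.coinduct (P := Eq) (N := Eq) (by rintro a _ rfl; exact .inl (.refl (hN.1 a)))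
    (by rintro a _ rfl; exact .inl (.refl (hN.2 a))) rfl

theorem NegSub.refl (hN : SigNormal Sg) (s : String) : NegSub Sg s s :=
  NegSub.coinduct (P := Eq) (N := Eq) (by rintro a _ rfl; exact .inl (.refl (hN.1 a)))
    (by rintro a _ rfl; exact .inl (.refl (hN.2 a))) rfl

theorem PosStrSub.trans {N N' : String → String → Prop} {σ τ π : PosStr}
    (hστ : PosStrSub Sg (PosSub Sg) N σ τ) (hτπ : PosStrSub Sg (PosSub Sg) N' τ π) :
    PosStrSub Sg (PosSub Sg ∘r PosSub Sg) (N ∘r N') σ π := by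
  cases hστ with
  | tensor h₁ h₂ => cases hτπ with | tensor h₁' h₂' => exact .tensor ⟨_, h₁, h₁'⟩ ⟨_, h₂, h₂'⟩
  | one => cases hτπ with | one => exact .one
  | down h => cases hτπ with | down h' => exact .down ⟨_, h, h'⟩
  | plus h =>
    cases hτπ with
    | plus h' =>
      refine .plus fun p hp => ?_
      obtain ⟨tj, hpj, htj | ⟨uj, hl, htu⟩⟩ := h p hp
      · exact ⟨tj, hpj, .inl htj⟩
      obtain ⟨_, ⟨⟩, huj | ⟨vj, hl', huv⟩⟩ := h' _ (List.mem_of_lookup_eq_some hl)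
      · exact ⟨tj, hpj, .inl (huj.of_posSub htu)⟩
      · exact ⟨tj, hpj, .inr ⟨vj, hl', uj, htu, huv⟩⟩

theorem NegStrSub.trans {N N' : String → String → Prop} {σ ρ π : NegStr}
    (hσρ : NegStrSub Sg (PosSub Sg) N σ ρ) (hρπ : NegStrSub Sg (PosSub Sg) N' ρ π) :
    NegStrSub Sg (PosSub Sg ∘r PosSub Sg) (N ∘r N') σ π := by
  cases hσρ with
  | upEmpty h => exact .upEmpty h
  | arrow h₁ h₂ => cases hρπ with | arrow h₁' h₂' => exact .arrow ⟨_, h₁', h₁⟩ ⟨_, h₂, h₂'⟩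
  | up h =>
    cases hρπ with
    | up h' => exact .up ⟨_, h, h'⟩
    | upEmpty h' => exact .upEmpty (h'.of_posSub h)
  | withRec h =>
    cases hρπ with
    | withRec h' =>
      refine .withRec fun p hp => ?_
      obtain ⟨rj, hpj, sj, hl, hsr⟩ := h' p hp
      obtain ⟨_, ⟨⟩, qj, hl', hqs⟩ := h _ (List.mem_of_lookup_eq_some hl)
      exact ⟨rj, hpj, qj, hl', sj, hqs, hsr⟩

theorem PosSub.comp_unfold {a c : String} (h : (PosSub Sg ∘r PosSub Sg) a c) :
    PosStrSub Sg (PosSub Sg ∘r PosSub Sg) (NegSub Sg ∘r NegSub Sg) (Sg.pos a) (Sg.pos c) ∨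
      TpEmpty Sg a := by
  obtain ⟨b, hab, hbc⟩ := h
  rcases hbc.unfold with hbc' | hb
  · exact hab.unfold.imp_left (·.trans hbc')
  · exact .inr (hb.of_posSub hab)

theorem NegSub.comp_unfold {a c : String} (h : (NegSub Sg ∘r NegSub Sg) a c) :
    NegStrSub Sg (PosSub Sg ∘r PosSub Sg) (NegSub Sg ∘r NegSub Sg) (Sg.neg a) (Sg.neg c) ∨
      TpFull Sg c := by
  obtain ⟨b, hab, hbc⟩ := h
  rcases hab.unfold with hab' | hb
  · exact hbc.unfold.imp_left hab'.trans
  · exact .inr (hb.of_negSub hbc)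

theorem PosSub.trans {t₁ t₂ t₃ : String} (h₁ : PosSub Sg t₁ t₂) (h₂ : PosSub Sg t₂ t₃) :
    PosSub Sg t₁ t₃ :=
  PosSub.coinduct (fun _ _ => PosSub.comp_unfold) (fun _ _ => NegSub.comp_unfold) ⟨t₂, h₁, h₂⟩

theorem NegSub.trans {s₁ s₂ s₃ : String} (h₁ : NegSub Sg s₁ s₂) (h₂ : NegSub Sg s₂ s₃) :
    NegSub Sg s₁ s₃ :=
  NegSub.coinduct (fun _ _ => PosSub.comp_unfold) (fun _ _ => NegSub.comp_unfold) ⟨s₂, h₁, h₂⟩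

end Development

/-- Reflexivity and transitivity of syntactic subtyping over a signature in
normal form:
(1) `t ≤ t` and `s ≤ s` for all positive type names `t` and negative type
    names `s` defined in the signature;
(2) if `t₁ ≤ t₂` and `t₂ ≤ t₃` then `t₁ ≤ t₃`;
(3) if `s₁ ≤ s₂` and `s₂ ≤ s₃` then `s₁ ≤ s₃`. -/
theorem subtyping_refl_trans (Sg : Signature) (hN : SigNormal Sg) :
    ((∀ t : String, PosSub Sg t t) ∧ (∀ s : String, NegSub Sg s s)) ∧
    (∀ t₁ t₂ t₃ : String, PosSub Sg t₁ t₂ → PosSub Sg t₂ t₃ → PosSub Sg t₁ t₃) ∧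
    (∀ s₁ s₂ s₃ : String, NegSub Sg s₁ s₂ → NegSub Sg s₂ s₃ → NegSub Sg s₁ s₃) :=
  ⟨⟨PosSub.refl hN, NegSub.refl hN⟩, fun _ _ _ => PosSub.trans, fun _ _ _ => NegSub.trans⟩

end CBPV
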